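/- arXiv:1312.7493 — 2 statements merged into one kernel-verified Lean document; each statement's English description precedes it below -/
import Mathlib

section
/- Let C be a triangulated category endowed with a weight structure w and let i ∈ ℤ. Then C_{w≥i} = (C_{w≤i−1})^⊥, i.e., an object M of C belongs to C_{w≥i} if and only if Hom(X, M) = 0 for every X ∈ C_{w≤i−1}. -/
open CategoryTheory CategoryTheory.Limits CategoryTheory.Pretriangulated CategoryTheory.Category
open scoped ZeroObject

universe w v u

/-- `X` is a retract of `Y`: the identity of `X` factors through `Y`. -/
def IsRetract {D : Type*} [Category D] (X Y : D) : Prop :=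
  ∃ (i : X ⟶ Y) (r : Y ⟶ X), i ≫ r = 𝟙 X

/-- A weight structure on a triangulated category `C`. -/
structure WeightStructure (C : Type u) [Category.{v} C] [Preadditive C] [HasZeroObject C]
    [HasShift C ℤ] [∀ n : ℤ, (shiftFunctor C n).Additive] [Pretriangulated C] where
  /-- the class `C_{w≤0}` -/
  LE : Set C
  /-- the class `C_{w≥0}` -/
  GE : Set C
  le_retract : ∀ ⦃X Y : C⦄, IsRetract X Y → Y ∈ LE → X ∈ LE
  ge_retract : ∀ ⦃X Y : C⦄, IsRetract X Y → Y ∈ GE → X ∈ GE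
  le_shift : ∀ X : C, X ∈ LE → X⟦(-1 : ℤ)⟧ ∈ LE
  ge_shift : ∀ X : C, X ∈ GE → X⟦(1 : ℤ)⟧ ∈ GE
  orthogonal : ∀ ⦃X Y : C⦄, X ∈ LE → Y ∈ GE → ∀ f : X ⟶ Y⟦(1 : ℤ)⟧, f = 0
  exists_decomp : ∀ M : C, ∃ (B A : C) (f : B ⟶ M) (g : M ⟶ A) (h : A ⟶ B⟦(1 : ℤ)⟧),
    B ∈ LE ∧ A⟦(-1 : ℤ)⟧ ∈ GE ∧ Triangle.mk f g h ∈ distTriang C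

namespace WeightStructure

variable {C : Type u} [Category.{v} C] [Preadditive C] [HasZeroObject C]
  [HasShift C ℤ] [∀ n : ℤ, (shiftFunctor C n).Additive] [Pretriangulated C]

/-- the class `C_{w≤i} = C_{w≤0}[i]` -/
def leSet (w : WeightStructure C) (i : ℤ) : Set C := {X : C | X⟦-i⟧ ∈ w.LE}

/-- the class `C_{w≥i} = C_{w≥0}[i]` -/
def geSet (w : WeightStructure C) (i : ℤ) : Set C := {X : C | X⟦-i⟧ ∈ w.GE}

/-- the class `C_{w=i} = C_{w≤i} ∩ C_{w≥i}` -/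
def eqSet (w : WeightStructure C) (i : ℤ) : Set C := w.leSet i ∩ w.geSet i

end WeightStructure

variable {C : Type u} [Category.{v} C] [Preadditive C] [HasZeroObject C]
  [HasShift C ℤ] [∀ n : ℤ, (shiftFunctor C n).Additive] [Pretriangulated C]

/- The inclusion `C_{w≥i} ⊆ (C_{w≤i-1})^⊥` is the orthogonality axiom, shifted. Conversely, let
`N = M[-i]` and take a weight decomposition `B → N[1] → A → B[1]`. By hypothesis (shifted back) the
map `B → N[1]` vanishes, so `N[1] → A` is a split monomorphism; hence `N ≅ N[1][-1]` is a retract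
of `A[-1] ∈ C_{w≥0}`. -/

namespace WeightStructure

lemma mem_LE_of_iso (w : WeightStructure C) {X Y : C} (e : X ≅ Y) (hY : Y ∈ w.LE) : X ∈ w.LE :=
  w.le_retract ⟨e.hom, e.inv, e.hom_inv_id⟩ hY

lemma mem_GE_of_retract (w : WeightStructure C) {X Y : C} (h : Retract X Y) (hY : Y ∈ w.GE) :
    X ∈ w.GE :=
  w.ge_retract ⟨h.i, h.r, h.retract⟩ hY

lemma shift_mem_leSet (w : WeightStructure C) {B : C} (hB : B ∈ w.LE) (n : ℤ) :
    B⟦n⟧ ∈ w.leSet n :=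
  w.mem_LE_of_iso ((shiftFunctorCompIsoId C n (-n) (add_neg_cancel n)).app B) hB

lemma hom_eq_zero_of_mem_leSet_of_mem_geSet (w : WeightStructure C) {i : ℤ} {X Y : C}
    (hX : X ∈ w.leSet (i - 1)) (hY : Y ∈ w.geSet i) (f : X ⟶ Y) : f = 0 := by
  let e : Y⟦-(i - 1)⟧ ≅ Y⟦-i⟧⟦(1 : ℤ)⟧ := (shiftFunctorAdd' C (-i) 1 (-(i - 1)) (by ring)).app Y
  have := w.orthogonal hX hY (f⟦-(i - 1)⟧' ≫ e.hom)
  rwa [Preadditive.IsIso.comp_right_eq_zero, Functor.map_eq_zero_iff] at this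

lemma mem_GE_of_forall_hom_to_shift_eq_zero (w : WeightStructure C) {N : C}
    (h : ∀ B ∈ w.LE, ∀ f : B ⟶ N⟦(1 : ℤ)⟧, f = 0) : N ∈ w.GE := by
  obtain ⟨B, A, f, g, _, hB, hA, hT⟩ := w.exists_decomp (N⟦(1 : ℤ)⟧)
  have : Mono g := Triangle.mono₂ _ hT (h B hB f)
  have := isSplitMono_of_mono g
  let hN : Retract (N⟦(1 : ℤ)⟧) A := { i := g, r := retraction g }
  exact w.mem_GE_of_retract
    (((shiftFunctorCompIsoId C (1 : ℤ) (-1) (add_neg_cancel 1)).app N).symm.retract.trans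
      (hN.map (shiftFunctor C (-1)))) hA

end WeightStructure

/-- Proposition 2.1.3(8): `C_{w≥i} = (C_{w≤i-1})^⊥`. -/
theorem geSet_eq_rightOrthogonal (w : WeightStructure C) (i : ℤ) (M : C) :
    M ∈ w.geSet i ↔ ∀ X ∈ w.leSet (i - 1), ∀ f : X ⟶ M, f = 0 := by
  refine ⟨fun hM X hX f => w.hom_eq_zero_of_mem_leSet_of_mem_geSet hX hM f, fun h => ?_⟩
  refine w.mem_GE_of_forall_hom_to_shift_eq_zero fun B hB g => ?_
  let e : M⟦-i⟧⟦(1 : ℤ)⟧⟦i - 1⟧ ≅ M :=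
    (shiftFunctor C (i - 1)).mapIso ((shiftFunctorAdd' C (-i) 1 (1 - i) (by ring)).app M).symm ≪≫
      (shiftFunctorCompIsoId C (1 - i) (i - 1) (by ring)).app M
  have := h _ (w.shift_mem_leSet hB (i - 1)) (g⟦i - 1⟧' ≫ e.hom)
  rwa [Preadditive.IsIso.comp_right_eq_zero, Functor.map_eq_zero_iff] at this
end

section
/- Let C be a triangulated category endowed with a weight structure w, and let l ≤ m be integers. Then the class C_{[l,m]} := C_{w≥l} ∩ C_{w≤m} is the smallest subclass of objects of C that contains C_{w=j} for all l ≤ j ≤ m, is closed under retracts, and is extension-closed (contains 0 and, for any distinguished triangle A → B → C with A and C in the class, contains B). -/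
open CategoryTheory CategoryTheory.Limits CategoryTheory.Pretriangulated CategoryTheory.Category
open scoped ZeroObject

universe w v u

variable {C : Type u} [Category.{v} C] [Preadditive C] [HasZeroObject C]
  [HasShift C ℤ] [∀ n : ℤ, (shiftFunctor C n).Additive] [Pretriangulated C]

/-- A class of objects is extension-closed if it contains `0` and is stable under
extensions given by distinguished triangles. -/
def ExtensionClosed (S : Set C) : Prop :=
  (0 : C) ∈ S ∧
  ∀ (T : Triangle C), T ∈ (distTriang C) → T.obj₁ ∈ S → T.obj₃ ∈ S → T.obj₂ ∈ S

/-!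
For `l ≤ m`, a decomposition `B → M → A → B[1]` of `M ∈ C_{[l,m+1]}` with `B ∈ C_{w≤m}` and
`A ∈ C_{w≥m+1}` has `B ∈ C_{[l,m]}` and `A ∈ C_{w=m+1}`, as one sees from the rotated triangles
and the extension-closedness of `C_{w≤m+1}` and `C_{w≥l}`. Induction on `m` then shows that any
extension-closed class containing the `C_{w=j}` contains `C_{[l,m]}`. Extension-closedness of
`C_{w≤n}` comes from orthogonality: decomposing the middle term `M` of a triangle with outer terms
in `C_{w≤n}`, the map `M → A` to the `C_{w≥n+1}`-part vanishes, so `M` is a retract of `B`.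
-/

namespace IsRetract

variable {D E : Type*} [Category D] [Category E]

lemma of_iso {X Y : D} (e : X ≅ Y) : IsRetract X Y :=
  ⟨e.hom, e.inv, e.hom_inv_id⟩

lemma of_isZero [HasZeroMorphisms D] {X : D} (hX : IsZero X) (Y : D) : IsRetract X Y :=
  ⟨0, 0, hX.eq_of_src _ _⟩

lemma map {X Y : D} (h : IsRetract X Y) (F : D ⥤ E) : IsRetract (F.obj X) (F.obj Y) := by
  obtain ⟨i, r, hir⟩ := h
  exact ⟨F.map i, F.map r, by rw [← F.map_comp, hir, F.map_id]⟩

end IsRetract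

lemma isRetract_obj₂_obj₁_of_mor₂_eq_zero {T : Triangle C} (hT : T ∈ distTriang C)
    (h : T.mor₂ = 0) : IsRetract T.obj₂ T.obj₁ := by
  obtain ⟨r, hr⟩ := Triangle.coyoneda_exact₂ T hT (𝟙 T.obj₂) (by rw [h, comp_zero])
  exact ⟨r, T.mor₁, hr.symm⟩

lemma isRetract_obj₂_obj₃_of_mor₁_eq_zero {T : Triangle C} (hT : T ∈ distTriang C)
    (h : T.mor₁ = 0) : IsRetract T.obj₂ T.obj₃ := by
  obtain ⟨s, hs⟩ := Triangle.yoneda_exact₂ T hT (𝟙 T.obj₂) (by rw [h, zero_comp])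
  exact ⟨T.mor₂, s, hs.symm⟩

lemma isDistinguished_mk_of_iso_obj₂ {T : Triangle C} (hT : T ∈ distTriang C) {M : C}
    (e : T.obj₂ ≅ M) : Triangle.mk (T.mor₁ ≫ e.hom) (e.inv ≫ T.mor₂) T.mor₃ ∈ distTriang C :=
  isomorphic_distinguished _ hT _
    (Triangle.isoMk _ _ (Iso.refl _) e.symm (Iso.refl _) (by simp [Triangle.mk])
      (by simp [Triangle.mk]) (by simp [Triangle.mk]))

lemma ExtensionClosed.inter {S S' : Set C} (hS : ExtensionClosed S) (hS' : ExtensionClosed S') :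
    ExtensionClosed (S ∩ S') :=
  ⟨⟨hS.1, hS'.1⟩, fun T hT h₁ h₃ => ⟨hS.2 T hT h₁.1 h₃.1, hS'.2 T hT h₁.2 h₃.2⟩⟩

namespace WeightStructure

variable (w : WeightStructure C)

lemma mem_leSet_of_isRetract {i : ℤ} {X Y : C} (h : IsRetract X Y) (hY : Y ∈ w.leSet i) :
    X ∈ w.leSet i :=
  w.le_retract (h.map _) hY

lemma mem_geSet_of_isRetract {i : ℤ} {X Y : C} (h : IsRetract X Y) (hY : Y ∈ w.geSet i) :
    X ∈ w.geSet i :=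
  w.ge_retract (h.map _) hY

lemma shift_mem_leSet_s8 {i : ℤ} {X : C} (h : X ∈ w.leSet i) (a : ℤ) : X⟦a⟧ ∈ w.leSet (i + a) :=
  w.le_retract (.of_iso ((shiftFunctorAdd' C a (-(i + a)) (-i) (by ring)).app X).symm) h

lemma shift_mem_geSet {i : ℤ} {X : C} (h : X ∈ w.geSet i) (a : ℤ) : X⟦a⟧ ∈ w.geSet (i + a) :=
  w.ge_retract (.of_iso ((shiftFunctorAdd' C a (-(i + a)) (-i) (by ring)).app X).symm) h

lemma leSet_monotone : Monotone w.leSet :=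
  monotone_int_of_le_succ fun i X hX =>
    w.le_retract (.of_iso ((shiftFunctorAdd' C (-i) (-1) (-(i + 1)) (by ring)).app X))
      (w.le_shift _ hX)

lemma geSet_antitone : Antitone w.geSet :=
  antitone_int_of_succ_le fun i X hX =>
    w.ge_retract (.of_iso ((shiftFunctorAdd' C (-(i + 1)) 1 (-i) (by ring)).app X))
      (w.ge_shift _ hX)

lemma hom_eq_zero {m n : ℤ} (hmn : m < n) {X Y : C} (hX : X ∈ w.leSet m) (hY : Y ∈ w.geSet n)
    (f : X ⟶ Y) : f = 0 := by
  have hY' : Y ∈ w.geSet (m + 1) := w.geSet_antitone (Int.add_one_le_iff.2 hmn) hY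
  let e : Y⟦-m⟧ ≅ Y⟦-(m + 1)⟧⟦(1 : ℤ)⟧ := (shiftFunctorAdd' C (-(m + 1)) 1 (-m) (by ring)).app Y
  have hshift : f⟦-m⟧' = 0 :=
    (cancel_mono e.hom).1 (by rw [zero_comp]; exact w.orthogonal hX hY' _)
  exact (shiftFunctor C (-m)).map_injective (by rw [hshift, Functor.map_zero])

lemma exists_distTriang_mem_leSet_mem_geSet (n : ℤ) (M : C) :
    ∃ (B A : C) (f : B ⟶ M) (g : M ⟶ A) (h : A ⟶ B⟦(1 : ℤ)⟧),
      Triangle.mk f g h ∈ distTriang C ∧ B ∈ w.leSet n ∧ A ∈ w.geSet (n + 1) := by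
  obtain ⟨B, A, f, g, h, hB, hA, hT⟩ := w.exists_decomp (M⟦-n⟧)
  refine ⟨_, _, _, _, _, isDistinguished_mk_of_iso_obj₂ (Triangle.shift_distinguished _ hT n)
    ((shiftFunctorCompIsoId C (-n) n (neg_add_cancel n)).app M), ?_, ?_⟩
  · exact w.le_retract (.of_iso ((shiftFunctorCompIsoId C n (-n) (add_neg_cancel n)).app B)) hB
  · exact (add_comm 1 n) ▸ w.shift_mem_geSet (i := 1) hA n

lemma zero_mem_leSet (n : ℤ) : (0 : C) ∈ w.leSet n := by
  obtain ⟨B, -, -, -, -, -, hB, -⟩ := w.exists_distTriang_mem_leSet_mem_geSet n 0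
  exact w.mem_leSet_of_isRetract (.of_isZero (isZero_zero C) B) hB

lemma zero_mem_geSet (n : ℤ) : (0 : C) ∈ w.geSet n := by
  obtain ⟨-, A, -, -, -, -, -, hA⟩ := w.exists_distTriang_mem_leSet_mem_geSet (n - 1) 0
  rw [sub_add_cancel] at hA
  exact w.mem_geSet_of_isRetract (.of_isZero (isZero_zero C) A) hA

lemma extensionClosed_leSet (n : ℤ) : ExtensionClosed (w.leSet n) := by
  refine ⟨w.zero_mem_leSet n, fun T hT h₁ h₃ => ?_⟩
  obtain ⟨B, A, f, g, h, hD, hB, hA⟩ := w.exists_distTriang_mem_leSet_mem_geSet n T.obj₂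
  have hg : g = 0 := by
    obtain ⟨q, hq⟩ := Triangle.yoneda_exact₂ T hT g (w.hom_eq_zero (lt_add_one n) h₁ hA _)
    rw [hq, w.hom_eq_zero (lt_add_one n) h₃ hA q, comp_zero]
  exact w.mem_leSet_of_isRetract
    (isRetract_obj₂_obj₁_of_mor₂_eq_zero (T := Triangle.mk f g h) hD hg) hB

lemma extensionClosed_geSet (n : ℤ) : ExtensionClosed (w.geSet n) := by
  refine ⟨w.zero_mem_geSet n, fun T hT h₁ h₃ => ?_⟩
  obtain ⟨B, A, f, g, h, hD, hB, hA⟩ := w.exists_distTriang_mem_leSet_mem_geSet (n - 1) T.obj₂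
  rw [sub_add_cancel] at hA
  have hf : f = 0 := by
    obtain ⟨q, hq⟩ := Triangle.coyoneda_exact₂ T hT f (w.hom_eq_zero (sub_one_lt n) hB h₃ _)
    rw [hq, w.hom_eq_zero (sub_one_lt n) hB h₁ q, zero_comp]
  exact w.mem_geSet_of_isRetract
    (isRetract_obj₂_obj₃_of_mor₁_eq_zero (T := Triangle.mk f g h) hD hf) hA

lemma exists_distTriang_mem_interval_mem_eqSet {l m : ℤ} (hlm : l ≤ m) {M : C}
    (hM : M ∈ w.geSet l ∩ w.leSet (m + 1)) :
    ∃ (B A : C) (f : B ⟶ M) (g : M ⟶ A) (h : A ⟶ B⟦(1 : ℤ)⟧),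
      Triangle.mk f g h ∈ distTriang C ∧ B ∈ w.geSet l ∩ w.leSet m ∧ A ∈ w.eqSet (m + 1) := by
  obtain ⟨B, A, f, g, h, hD, hB, hA⟩ := w.exists_distTriang_mem_leSet_mem_geSet m M
  have hB_ge : B ∈ w.geSet l := by
    have hA' : A⟦(-1 : ℤ)⟧ ∈ w.geSet l :=
      w.geSet_antitone (by omega) (w.shift_mem_geSet hA (-1))
    exact (w.extensionClosed_geSet l).2 _ (inv_rot_of_distTriang _ hD) hA' hM.1
  have hA_le : A ∈ w.leSet (m + 1) :=
    (w.extensionClosed_leSet (m + 1)).2 _ (rot_of_distTriang _ hD) hM.2 (w.shift_mem_leSet_s8 hB 1)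
  exact ⟨B, A, f, g, h, hD, ⟨hB_ge, hB⟩, hA_le, hA⟩

lemma geSet_inter_leSet_subset {S : Set C} {l m : ℤ} (hlm : l ≤ m)
    (hS_eq : ∀ j : ℤ, l ≤ j → j ≤ m → w.eqSet j ⊆ S) (hS_ext : ExtensionClosed S) :
    w.geSet l ∩ w.leSet m ⊆ S := by
  induction m, hlm using Int.leInduction with
  | base => exact fun M hM => hS_eq l le_rfl le_rfl ⟨hM.2, hM.1⟩
  | succ m hlm ih =>
    intro M hM
    obtain ⟨B, A, f, g, h, hD, hB, hA⟩ := w.exists_distTriang_mem_interval_mem_eqSet hlm hM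
    exact hS_ext.2 _ hD (ih (fun j hlj hjm => hS_eq j hlj (by omega)) hB)
      (hS_eq (m + 1) (by omega) le_rfl hA)

end WeightStructure

/-- Proposition 2.1.3(10): for `l ≤ m`, the class `C_{[l,m]} = C_{w≥l} ∩ C_{w≤m}` is the
smallest retract-closed and extension-closed class of objects containing `C_{w=j}` for
all `l ≤ j ≤ m`. -/
theorem interval_is_smallest_class (w : WeightStructure C) (l m : ℤ) (hlm : l ≤ m) :
    ((∀ j : ℤ, l ≤ j → j ≤ m → w.eqSet j ⊆ w.geSet l ∩ w.leSet m) ∧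
      (∀ ⦃X Y : C⦄, IsRetract X Y → Y ∈ w.geSet l ∩ w.leSet m → X ∈ w.geSet l ∩ w.leSet m) ∧
      ExtensionClosed (w.geSet l ∩ w.leSet m)) ∧
    (∀ S : Set C, (∀ j : ℤ, l ≤ j → j ≤ m → w.eqSet j ⊆ S) →
      (∀ ⦃X Y : C⦄, IsRetract X Y → Y ∈ S → X ∈ S) →
      ExtensionClosed S →
      w.geSet l ∩ w.leSet m ⊆ S) :=
  ⟨⟨fun _ hlj hjm _ hX => ⟨w.geSet_antitone hlj hX.2, w.leSet_monotone hjm hX.1⟩,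
      fun _ _ h hY => ⟨w.mem_geSet_of_isRetract h hY.1, w.mem_leSet_of_isRetract h hY.2⟩,
      (w.extensionClosed_geSet l).inter (w.extensionClosed_leSet m)⟩,
    fun _ hS_eq _ hS_ext => w.geSet_inter_leSet_subset hlm hS_eq hS_ext⟩
end
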